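/- arXiv:2206.04036 — 2 statements merged into one kernel-verified Lean document; each statement's English description precedes it below -/
import Mathlib

section
/- Let C be a simple graph on n ≥ 1 vertices and let t ≥ 1. Then lim_{m→∞} k_t( complement of C[m] ) / binomial(mn, t) = ( Σ_{j=1}^{t} j! · S(t,j) · k_j(Ḡ_C) ) / n^t, where Ḡ_C is the complement of C, C[m] is the m-fold blow-up of C, and S(t,j) = Σ_{i=0}^{j} (−1)^i · binomial(j,i) · (j−i)^t / j! is the Stirling number of the second kind. -/
open Filter Topology

/-- `kcount t G` is the number of `t`-element vertex subsets of `G` inducing a clique,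
i.e. the number of copies of `K_t` in `G`. -/
noncomputable def kcount {V : Type*} (t : ℕ) (G : SimpleGraph V) : ℕ :=
  Nat.card {s : Finset V // G.IsNClique t s}

/-- The Stirling number of the second kind, via the explicit formula
`S(t,j) = (1/j!) · Σ_{i=0}^{j} (−1)^i · C(j,i) · (j−i)^t`. -/
noncomputable def stirling2 (t j : ℕ) : ℝ :=
  (∑ i ∈ Finset.range (j + 1),
      (-1 : ℝ) ^ i * (j.choose i : ℝ) * ((j - i : ℕ) : ℝ) ^ t) / (j.factorial : ℝ)


/-!
Count labelled cliques. `t! · k_t` of the complement of `C[m]` is the number of injective maps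
`f : [t] → V(C) × [m]` whose projection `g = fst ∘ f` has an independent image in `C`. Each such
`g` has exactly `m^t` lifts, and all but `(mn)^t − (mn)_t` maps `[t] → V(C) × [m]` are injective,
so `t! · k_t = N m^t + O(m^(t-1))`, where `N` counts the maps `[t] → V(C)` with independent image.
Dividing by `t! · binom(mn, t) = (mn)_t ~ (mn)^t` gives the limit `N / n^t`. Grouping maps by
their image, `N = Σ_j surj(t, j) · k_j(Cᶜ)`, and by inclusion–exclusion the number of surjections
`[t] → [j]` is `j! · S(t, j)`.
-/

open Finset Function SimpleGraph Asymptotics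

theorem compl_isClique_image_iff {α β : Type*} [Fintype α] [DecidableEq β]
    (G : SimpleGraph β) (f : α → β) :
    Gᶜ.IsClique (univ.image f : Set β) ↔ ∀ a b, ¬ G.Adj (f a) (f b) := by
  rw [coe_image, coe_univ, Set.image_univ]
  constructor
  · intro h a b hab
    by_cases he : f a = f b
    · exact G.irrefl (he ▸ hab)
    · exact (h (Set.mem_range_self a) (Set.mem_range_self b) he).2 hab
  · rintro h _ ⟨a, rfl⟩ _ ⟨b, rfl⟩ hne
    exact ⟨hne, h a b⟩

theorem isNClique_card_image_iff {α β : Type*} [Fintype α] [DecidableEq β]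
    (G : SimpleGraph β) (f : α → β) :
    G.IsNClique (Fintype.card α) (univ.image f) ↔
      G.IsClique (univ.image f : Set β) ∧ Injective f := by
  rw [isNClique_iff, ← card_univ, card_image_iff, coe_univ, Set.injOn_univ]

section Counting

variable {α β : Type*} [Fintype α] [DecidableEq α] [Fintype β] [DecidableEq β]

theorem card_surjective_eq_sum :
    (#{f : α → β | Surjective f} : ℤ) = ∑ i ∈ range (Fintype.card β + 1),
      (-1) ^ i * ((Fintype.card β).choose i : ℤ) *
        ((Fintype.card β - i : ℕ) : ℤ) ^ Fintype.card α := by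
  set avoid : β → Finset (α → β) := fun b => {f | ∀ a, f a ≠ b}
  have h_sup : ({f : α → β | Surjective f} : Finset _) = (univ.sup avoid)ᶜ := by
    ext f; rw [mem_compl, Finset.mem_sup]; simp only [mem_filter_univ, avoid]; simp [Surjective]
  have h_inf (T : Finset β) : #(T.inf avoid) = (Fintype.card β - #T) ^ Fintype.card α := by
    have : T.inf avoid = Fintype.piFinset fun _ => Tᶜ := by
      induction T using Finset.cons_induction with
      | empty => ext f; simp
      | cons b T hb ih => ext f; simp [ih, avoid, Fintype.mem_piFinset, forall_and]
    simp [this, card_compl]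
  rw [h_sup, Finset.compl_sup, inclusion_exclusion_card_inf_compl]
  simp_rw [h_inf, Nat.cast_pow]
  rw [sum_powerset_apply_card
    (fun k => (-1 : ℤ) ^ k * ((Fintype.card β - k : ℕ) : ℤ) ^ Fintype.card α)]
  exact sum_congr (by simp) fun i _ => by simp; ring

theorem card_surjective_eq_factorial_mul_stirling2 :
    (#{f : α → β | Surjective f} : ℝ) =
      (Fintype.card β).factorial * stirling2 (Fintype.card α) (Fintype.card β) := by
  rw [stirling2, mul_div_cancel₀ _ (by positivity)]
  exact_mod_cast card_surjective_eq_sum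

theorem card_surjective_of_card_eq (h : Fintype.card α = Fintype.card β) :
    #{f : α → β | Surjective f} = (Fintype.card α).factorial := by
  rw [← Fintype.card_subtype, ← Fintype.card_equiv (Fintype.equivOfCardEq h)]
  exact Fintype.card_congr
    { toFun := fun f => Equiv.ofBijective f.1
        ((Fintype.bijective_iff_surjective_and_card _).2 ⟨f.2, h⟩)
      invFun := fun e => ⟨e, e.surjective⟩
      left_inv := fun f => rfl
      right_inv := fun e => Equiv.ext fun _ => rfl }

theorem card_filter_image_eq (s : Finset β) :
    #{f : α → β | univ.image f = s} = #{g : α → s | Surjective g} := by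
  simp only [← Fintype.card_subtype]
  refine Fintype.card_congr
    { toFun := fun f => ⟨fun a => ⟨f.1 a, f.2.subset (mem_image_of_mem f.1 (mem_univ a))⟩, ?_⟩
      invFun := fun g => ⟨fun a => g.1 a, ?_⟩
      left_inv := fun f => rfl
      right_inv := fun g => rfl }
  · rintro ⟨b, hb⟩
    obtain ⟨a, -, rfl⟩ := mem_image.mp (f.2.symm.subset hb)
    exact ⟨a, rfl⟩
  · ext b
    simp only [mem_image, mem_univ, true_and]
    refine ⟨?_, fun hb => ?_⟩
    · rintro ⟨a, rfl⟩
      exact (g.1 a).2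
    · obtain ⟨a, ha⟩ := g.2 ⟨b, hb⟩
      exact ⟨a, congrArg Subtype.val ha⟩

theorem card_filter_image_mem (T : Finset (Finset β)) :
    #{f : α → β | univ.image f ∈ T} = ∑ s ∈ T, #{g : α → s | Surjective g} := by
  rw [card_eq_sum_card_fiberwise (f := fun f => univ.image f) (t := T)
    fun f hf => by simpa using hf]
  refine sum_congr rfl fun s hs => ?_
  rw [← card_filter_image_eq, filter_filter]
  congr 1
  exact filter_congr fun f _ => ⟨And.right, fun h => ⟨h ▸ hs, h⟩⟩

theorem kcount_eq_card_cliqueFinset (G : SimpleGraph β) [DecidableRel G.Adj] (j : ℕ) :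
    kcount j G = #(G.cliqueFinset j) := by
  rw [kcount, Nat.card_eq_fintype_card, Fintype.card_subtype, cliqueFinset]

theorem card_filter_isNClique_image (G : SimpleGraph β) [DecidableRel G.Adj] :
    #{f : α → β | G.IsNClique (Fintype.card α) (univ.image f)} =
      (Fintype.card α).factorial * kcount (Fintype.card α) G := by
  simp_rw [← mem_cliqueFinset_iff, card_filter_image_mem, kcount_eq_card_cliqueFinset]
  rw [sum_const_nat fun s hs => card_surjective_of_card_eq ?_, mul_comm]
  rw [Fintype.card_coe, (mem_cliqueFinset_iff.mp hs).card_eq]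

theorem card_filter_isClique_image [Nonempty α] (G : SimpleGraph β) [DecidableRel G.Adj] :
    (#{f : α → β | G.IsClique (univ.image f : Set β)} : ℝ) =
      ∑ j ∈ Icc 1 (Fintype.card α),
        (j.factorial : ℝ) * stirling2 (Fintype.card α) j * kcount j G := by
  have h_filter : ({f : α → β | G.IsClique (univ.image f : Set β)} : Finset _) =
      ({f | univ.image f ∈ (Icc 1 (Fintype.card α)).biUnion G.cliqueFinset} : Finset _) := by
    ext f
    simp only [mem_filter_univ, mem_biUnion, mem_Icc, mem_cliqueFinset_iff, isNClique_iff]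
    refine ⟨fun h => ⟨_, ⟨?_, card_image_le⟩, h, rfl⟩, fun ⟨_, _, h, _⟩ => h⟩
    exact card_pos.mpr (univ_nonempty.image f)
  have h_disj : (Icc 1 (Fintype.card α) : Set ℕ).PairwiseDisjoint G.cliqueFinset := by
    intro i _ j _ hij
    refine disjoint_left.mpr fun s hi hj => hij ?_
    rw [← (mem_cliqueFinset_iff.mp hi).card_eq, (mem_cliqueFinset_iff.mp hj).card_eq]
  rw [h_filter, card_filter_image_mem, sum_biUnion h_disj, Nat.cast_sum]
  refine sum_congr rfl fun j _ => ?_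
  have h_surj (s) (hs : s ∈ G.cliqueFinset j) :
      (#{g : α → s | Surjective g} : ℝ) = j.factorial * stirling2 (Fintype.card α) j := by
    rw [card_surjective_eq_factorial_mul_stirling2, Fintype.card_coe,
      (mem_cliqueFinset_iff.mp hs).card_eq]
  rw [Nat.cast_sum, sum_congr rfl h_surj, sum_const, nsmul_eq_mul, mul_comm,
    kcount_eq_card_cliqueFinset]

theorem card_filter_add_descFactorial_le (P : (α → β) → Prop) [DecidablePred P] :
    #{f | P f} + (Fintype.card β).descFactorial (Fintype.card α) ≤
      #{f | P f ∧ Injective f} + Fintype.card β ^ Fintype.card α := by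
  have h_inj : #{f : α → β | Injective f} = (Fintype.card β).descFactorial (Fintype.card α) := by
    rw [← Fintype.card_subtype, ← Fintype.card_embedding_eq]
    exact Fintype.card_congr (Equiv.subtypeInjectiveEquivEmbedding α β)
  have h_P := card_filter_add_card_filter_not
    (s := ({f | P f} : Finset (α → β))) (fun f => Injective f)
  have h_univ := card_filter_add_card_filter_not
    (s := (univ : Finset (α → β))) (fun f => Injective f)
  have h_noninj : #(({f | P f} : Finset (α → β)).filter fun f => ¬ Injective f) ≤
      #{f : α → β | ¬ Injective f} :=
    card_le_card (filter_subset_filter _ (subset_univ _))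
  rw [filter_filter] at h_P
  rw [card_univ, Fintype.card_fun] at h_univ
  omega

end Counting

theorem card_filter_comp_fst {α β γ : Type*} [Fintype α] [DecidableEq α] [Fintype β] [Fintype γ]
    (P : (α → β) → Prop) [DecidablePred P] :
    #{f : α → β × γ | P (Prod.fst ∘ f)} = #{g | P g} * Fintype.card γ ^ Fintype.card α := by
  simp only [← Fintype.card_subtype]
  rw [← Fintype.card_fun, ← Fintype.card_prod]
  exact Fintype.card_congr <|
    ((Equiv.arrowProdEquivProdArrow α (fun _ => β) (fun _ => γ)).subtypeEquiv
      fun _ => Iff.rfl).trans Equiv.prodSubtypeFstEquivSubtypeProd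

theorem factorial_mul_kcount_compl_comap_fst {α β γ : Type*} [Fintype α] [DecidableEq α]
    [Fintype β] [DecidableEq β] [Fintype γ] [DecidableEq γ]
    (C : SimpleGraph β) [DecidableRel C.Adj] :
    (Fintype.card α).factorial * kcount (Fintype.card α) (C.comap (Prod.fst : β × γ → β))ᶜ =
      #{f : α → β × γ | Cᶜ.IsClique (univ.image (Prod.fst ∘ f) : Set β) ∧ Injective f} := by
  rw [← card_filter_isNClique_image]
  congr 1
  refine filter_congr fun f _ => ?_
  rw [isNClique_card_image_iff, compl_isClique_image_iff, compl_isClique_image_iff]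
  rfl

theorem tendsto_pow_div_descFactorial (t : ℕ) :
    Tendsto (fun x : ℕ => (x : ℝ) ^ t / x.descFactorial t) atTop (𝓝 1) := by
  have h_ne : ∀ᶠ x : ℕ in atTop, (x.descFactorial t : ℝ) ≠ 0 :=
    eventually_atTop.mpr ⟨t, fun x hx => by simpa [Nat.descFactorial_eq_zero_iff_lt] using hx⟩
  exact (isEquivalent_iff_tendsto_one h_ne).mp (isEquivalent_descFactorial t).symm

theorem tendsto_div_descFactorial_of_bounds {n t N : ℕ} (hn : 0 < n) {B : ℕ → ℕ}
    (h_le : ∀ m, B m ≤ N * m ^ t)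
    (h_ge : ∀ m, N * m ^ t + (m * n).descFactorial t ≤ B m + (m * n) ^ t) :
    Tendsto (fun m => (B m : ℝ) / (m * n).descFactorial t) atTop (𝓝 (N / n ^ t)) := by
  set r : ℕ → ℝ := fun m => ((m * n : ℕ) : ℝ) ^ t / (m * n).descFactorial t
  have hr : Tendsto r atTop (𝓝 1) := (tendsto_pow_div_descFactorial t).comp <|
    tendsto_atTop_mono (fun m => Nat.le_mul_of_pos_right m hn) tendsto_id
  have h_main (m : ℕ) : (N * m ^ t : ℕ) / ((m * n).descFactorial t : ℝ) = N / n ^ t * r m := by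
    simp only [r]
    rw [mul_div_assoc']
    congr 1
    push_cast
    field_simp
    ring
  have h_upper : Tendsto (fun m => (N / n ^ t : ℝ) * r m) atTop (𝓝 (N / n ^ t)) := by
    simpa using hr.const_mul (N / n ^ t : ℝ)
  have h_lower : Tendsto (fun m => (N / n ^ t : ℝ) * r m + 1 - r m) atTop (𝓝 (N / n ^ t)) := by
    simpa using ((hr.const_mul (N / n ^ t : ℝ)).add_const 1).sub hr
  refine tendsto_of_tendsto_of_tendsto_of_le_of_le' h_lower h_upper ?_ ?_
  · filter_upwards [eventually_ge_atTop t] with m hm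
    have hD : (0 : ℝ) < (m * n).descFactorial t := by
      exact_mod_cast Nat.descFactorial_pos.mpr (le_trans hm (Nat.le_mul_of_pos_right m hn))
    have h_eq : (N / n ^ t : ℝ) * r m + 1 - r m =
        ((N * m ^ t : ℕ) + (m * n).descFactorial t - ((m * n : ℕ) : ℝ) ^ t) /
          (m * n).descFactorial t := by
      rw [← h_main]
      simp only [r]
      field_simp
    rw [h_eq]
    gcongr
    rw [sub_le_iff_le_add]
    exact_mod_cast h_ge m
  · exact Eventually.of_forall fun m => by
      rw [← h_main]
      gcongr
      exact_mod_cast h_le m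

/-- For a graph `C` on `n ≥ 1` vertices and `t ≥ 1`, the `K_t`-density of the complement
of the `m`-fold blow-up `C[m]` (realized as the comap of `C` along the projection
`Fin n × Fin m → Fin n`) tends to `(Σ_{j=1}^{t} j! · S(t,j) · k_j(Cᶜ)) / n^t`
as `m → ∞`. -/
theorem blowup_complement_clique_density (n t : ℕ) (hn : 1 ≤ n) (ht : 1 ≤ t)
    (C : SimpleGraph (Fin n)) :
    Filter.Tendsto (fun m : ℕ =>
        (kcount t (SimpleGraph.comap (Prod.fst : Fin n × Fin m → Fin n) C)ᶜ : ℝ) /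
          ((m * n).choose t : ℝ))
      Filter.atTop
      (nhds ((∑ j ∈ Finset.Icc 1 t,
          (j.factorial : ℝ) * stirling2 t j * (kcount j Cᶜ : ℝ)) / (n : ℝ) ^ t)) := by
  classical
  have : Nonempty (Fin t) := ⟨⟨0, ht⟩⟩
  set P : (Fin t → Fin n) → Prop := fun g => Cᶜ.IsClique (univ.image g : Set (Fin n))
  have h_maps : (#{g | P g} : ℝ) =
      ∑ j ∈ Icc 1 t, (j.factorial : ℝ) * stirling2 t j * (kcount j Cᶜ : ℝ) := by
    convert card_filter_isClique_image (α := Fin t) Cᶜ <;> simp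
  have h_lifts (m : ℕ) : #{f : Fin t → Fin n × Fin m | P (Prod.fst ∘ f)} = #{g | P g} * m ^ t := by
    simpa using card_filter_comp_fst (γ := Fin m) P
  have h_cliques (m : ℕ) :
      t.factorial * kcount t (C.comap (Prod.fst : Fin n × Fin m → Fin n))ᶜ =
        #{f : Fin t → Fin n × Fin m | P (Prod.fst ∘ f) ∧ Injective f} := by
    convert factorial_mul_kcount_compl_comap_fst (α := Fin t) (γ := Fin m) C <;> simp
  have h_lim := tendsto_div_descFactorial_of_bounds (by omega : 0 < n)
    (B := fun m => t.factorial * kcount t (C.comap (Prod.fst : Fin n × Fin m → Fin n))ᶜ)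
    (fun m => by
      rw [h_cliques, ← h_lifts]
      exact card_le_card (monotone_filter_right _ fun _ _ => And.left))
    (fun m => by
      simpa [h_cliques, ← h_lifts, mul_comm] using
        card_filter_add_descFactorial_le (fun f : Fin t → Fin n × Fin m => P (Prod.fst ∘ f)))
  rw [← h_maps]
  refine h_lim.congr fun m => ?_
  rw [Nat.descFactorial_eq_factorial_mul_choose, Nat.cast_mul, Nat.cast_mul,
    mul_div_mul_left _ _ (by positivity)]
end

section
/- Given integers s, t_0 ≥ 2 with g_{s,t_0} > 0, for every integer t ≥ t_0 one has g_{s,t} ≤ ( t − t_0 + g_{s,t_0}^{1/(1−s)} )^{1−s}. In particular, if g_{s,t_0} < (t_0 − 1)^{1−s}, then g_{s,t} < (t − 1)^{1−s} for all t ≥ t_0. -/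
open Filter Topology

/-- The `n`-th term of the sequence defining `g_{s,t}`: the minimum density of
independent `s`-sets among `K_t`-free graphs on `n` vertices. -/
noncomputable def gSeq (s t n : ℕ) : ℝ :=
  sInf {x : ℝ | ∃ G : SimpleGraph (Fin n), G.CliqueFree t ∧ x = (kcount s Gᶜ : ℝ)} /
    (n.choose s : ℝ)

/-- `g_{s,t}` is the limit of `gSeq s t`; the limit exists since the sequence is
nondecreasing and bounded, hence it equals the `limsup`. -/
noncomputable def gConst (s t : ℕ) : ℝ :=
  Filter.limsup (fun n => gSeq s t n) Filter.atTop

/-!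
Joining an independent set of size `(1 - β) n` to a `K_t`-free graph on `β n` vertices with few
independent `s`-sets gives a `K_{t+1}`-free graph on `n` vertices, and each of its independent sets
lies on one side of the join. Hence `g_{s,t+1} ≤ g_{s,t} β^s + (1 - β)^s`. If `g_{s,t} ≤ α^{1-s}`,
the choice `β = α / (α + 1)` turns the right-hand side into `(α + 1)^{1-s}`: each step from `t` to
`t + 1` raises the lower bound `α` on `g_{s,t}^{1/(1-s)}` by one, and the theorem follows by
induction on `t`.
-/

namespace SimpleGraph

variable {α β : Type*}

/-- The join of `G` and `H`: their disjoint union together with all edges between the sides. -/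
def join (G : SimpleGraph α) (H : SimpleGraph β) : SimpleGraph (α ⊕ β) := (Gᶜ ⊕g Hᶜ)ᶜ

variable {G : SimpleGraph α} {H : SimpleGraph β}

@[simp]
lemma compl_join : (G.join H)ᶜ = Gᶜ ⊕g Hᶜ :=
  compl_compl _

@[simp]
lemma join_adj_inl {a a' : α} : (G.join H).Adj (.inl a) (.inl a') ↔ G.Adj a a' := by
  by_cases h : a = a' <;> simp [join, h]

@[simp]
lemma join_adj_inr {b b' : β} : (G.join H).Adj (.inr b) (.inr b') ↔ H.Adj b b' := by
  by_cases h : b = b' <;> simp [join, h]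

lemma IsClique.card_lt_of_cliqueFree {n : ℕ} {T : Finset α} (hT : G.IsClique T)
    (hG : G.CliqueFree n) : T.card < n := by
  by_contra! h
  obtain ⟨T', hT'T, hT'⟩ := Finset.exists_subset_card_eq h
  exact hG T' ⟨hT.subset hT'T, hT'⟩

lemma CliqueFree.join {a b : ℕ} (hG : G.CliqueFree (a + 1)) (hH : H.CliqueFree (b + 1)) :
    (G.join H).CliqueFree (a + b + 1) := by
  intro S hS
  have hleft : G.IsClique S.toLeft := fun x hx y hy hxy => by
    simpa using hS.isClique (Finset.mem_toLeft.1 hx) (Finset.mem_toLeft.1 hy)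
      (Sum.inl_injective.ne hxy)
  have hright : H.IsClique S.toRight := fun x hx y hy hxy => by
    simpa using hS.isClique (Finset.mem_toRight.1 hx) (Finset.mem_toRight.1 hy)
      (Sum.inr_injective.ne hxy)
  have := hleft.card_lt_of_cliqueFree hG
  have := hright.card_lt_of_cliqueFree hH
  have := Finset.card_toLeft_add_card_toRight (u := S)
  have := hS.card_eq
  omega

lemma IsNClique.exists_eq_map_inl_or_inr {s : ℕ} {S : Finset (α ⊕ β)}
    (hS : (G ⊕g H).IsNClique s S) :
    (∃ T, G.IsNClique s T ∧ T.map .inl = S) ∨ (∃ T, H.IsNClique s T ∧ T.map .inr = S) := by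
  have hcard := Finset.card_toLeft_add_card_toRight (u := S)
  have hS_eq := Finset.toLeft_disjSum_toRight (u := S)
  by_cases hright : S.toRight = ∅
  · refine .inl ⟨S.toLeft, ⟨fun x hx y hy hxy => ?_, by
      rw [← hS.card_eq, ← hcard, hright, Finset.card_empty, add_zero]⟩, by
      rw [← Finset.disjSum_empty, ← hright, hS_eq]⟩
    simpa using hS.isClique (Finset.mem_toLeft.1 hx) (Finset.mem_toLeft.1 hy)
      (Sum.inl_injective.ne hxy)
  by_cases hleft : S.toLeft = ∅
  · refine .inr ⟨S.toRight, ⟨fun x hx y hy hxy => ?_, by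
      rw [← hS.card_eq, ← hcard, hleft, Finset.card_empty, zero_add]⟩, by
      rw [← Finset.empty_disjSum, ← hleft, hS_eq]⟩
    simpa using hS.isClique (Finset.mem_toRight.1 hx) (Finset.mem_toRight.1 hy)
      (Sum.inr_injective.ne hxy)
  obtain ⟨a, ha⟩ := Finset.nonempty_iff_ne_empty.2 hleft
  obtain ⟨b, hb⟩ := Finset.nonempty_iff_ne_empty.2 hright
  exact absurd (hS.isClique (Finset.mem_toLeft.1 ha) (Finset.mem_toRight.1 hb) Sum.inl_ne_inr)
    (not_adj_sum_inl_inr a b)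

lemma isNClique_comap_equiv_iff {t : ℕ} {G : SimpleGraph β} (e : α ≃ β)
    {S : Finset α} : (G.comap e).IsNClique t S ↔ G.IsNClique t (S.map e.toEmbedding) := by
  rw [isNClique_iff, isNClique_iff, IsClique, IsClique, Finset.coe_map,
    e.toEmbedding.injective.injOn.pairwise_image, Finset.card_map]
  rfl

lemma compl_comap_of_injective (G : SimpleGraph β) {f : α → β}
    (hf : f.Injective) : (G.comap f)ᶜ = Gᶜ.comap f := by
  ext u v
  simp [compl_adj, hf.eq_iff]

end SimpleGraph

open SimpleGraph

lemma kcount_eq_card_cliqueFinset_s16 {V : Type*} [Fintype V] [DecidableEq V] (t : ℕ)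
    (G : SimpleGraph V) [DecidableRel G.Adj] : kcount t G = (G.cliqueFinset t).card := by
  simp only [kcount, Nat.card_eq_fintype_card, Fintype.card_subtype, cliqueFinset]

lemma kcount_le_choose {V : Type*} [Fintype V] (t : ℕ) (G : SimpleGraph V) :
    kcount t G ≤ (Fintype.card V).choose t := by
  classical
  exact kcount_eq_card_cliqueFinset_s16 t G ▸ card_cliqueFinset_le

lemma kcount_comap_equiv {V W : Type*} (t : ℕ) (G : SimpleGraph W) (e : V ≃ W) :
    kcount t (G.comap e) = kcount t G :=
  Nat.card_congr (e.finsetCongr.subtypeEquiv fun _ => isNClique_comap_equiv_iff e)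

lemma kcount_sum_le {V W : Type*} [Finite V] [Finite W] {s : ℕ} (G : SimpleGraph V)
    (H : SimpleGraph W) : kcount s (G ⊕g H) ≤ kcount s G + kcount s H := by
  classical
  have := Fintype.ofFinite V
  have := Fintype.ofFinite W
  simp only [kcount_eq_card_cliqueFinset_s16]
  set cliquesLeft := (G.cliqueFinset s).map (Finset.mapEmbedding (.inl : V ↪ V ⊕ W)).toEmbedding
  set cliquesRight := (H.cliqueFinset s).map (Finset.mapEmbedding (.inr : W ↪ V ⊕ W)).toEmbedding
  have hsub : (G ⊕g H).cliqueFinset s ⊆ cliquesLeft ∪ cliquesRight := by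
    intro S hS
    rw [mem_cliqueFinset_iff] at hS
    simpa [cliquesLeft, cliquesRight] using hS.exists_eq_map_inl_or_inr
  calc ((G ⊕g H).cliqueFinset s).card ≤ (cliquesLeft ∪ cliquesRight).card :=
        Finset.card_le_card hsub
    _ ≤ cliquesLeft.card + cliquesRight.card := Finset.card_union_le _ _
    _ = _ := by simp [cliquesLeft, cliquesRight]

open Asymptotics

section gSeq

variable {s t n : ℕ}

lemma gSeq_nonneg : 0 ≤ gSeq s t n :=
  div_nonneg (Real.sInf_nonneg fun _ ⟨_, _, hx⟩ => hx ▸ Nat.cast_nonneg _) (Nat.cast_nonneg _)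

lemma gSeq_le_of_card_eq {V : Type*} [Fintype V] (hV : Fintype.card V = n) {G : SimpleGraph V}
    (hG : G.CliqueFree t) : gSeq s t n ≤ kcount s Gᶜ / n.choose s := by
  let e : Fin n ≃ V := (Fintype.equivFinOfCardEq hV).symm
  have hG' : (G.comap e).CliqueFree t := hG.comap (Iso.comap e G).isContained
  have hcount : kcount s (G.comap e)ᶜ = kcount s Gᶜ := by
    rw [compl_comap_of_injective G e.injective, kcount_comap_equiv]
  refine div_le_div_of_nonneg_right ?_ (Nat.cast_nonneg _)
  exact csInf_le ⟨0, fun _ ⟨_, _, hx⟩ => hx ▸ Nat.cast_nonneg _⟩ ⟨_, hG', by rw [hcount]⟩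

lemma gSeq_le_one (ht : 2 ≤ t) : gSeq s t n ≤ 1 := by
  refine (gSeq_le_of_card_eq (Fintype.card_fin n) (cliqueFree_bot ht)).trans ?_
  refine div_le_one_of_le₀ ?_ (Nat.cast_nonneg _)
  exact_mod_cast Fintype.card_fin n ▸ kcount_le_choose s _

lemma exists_cliqueFree_kcount_compl_le (ht : 2 ≤ t) (hsn : s ≤ n) {b : ℝ}
    (hb : gSeq s t n < b) :
    ∃ H : SimpleGraph (Fin n), H.CliqueFree t ∧ (kcount s Hᶜ : ℝ) ≤ b * n.choose s := by
  have hc : (0 : ℝ) < n.choose s := by exact_mod_cast Nat.choose_pos hsn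
  rw [gSeq, div_lt_iff₀ hc] at hb
  have hne : {x : ℝ | ∃ G : SimpleGraph (Fin n), G.CliqueFree t ∧ x = kcount s Gᶜ}.Nonempty :=
    ⟨_, ⊥, cliqueFree_bot ht, rfl⟩
  obtain ⟨_, ⟨H, hH, rfl⟩, hlt⟩ := exists_lt_of_csInf_lt hne hb
  exact ⟨H, hH, hlt.le⟩

lemma gSeq_succ_le (ht : t ≠ 0) {m : ℕ} (hmn : m ≤ n) {H : SimpleGraph (Fin m)}
    (hH : H.CliqueFree t) :
    gSeq s (t + 1) n ≤ (kcount s Hᶜ + (n - m).choose s) / n.choose s := by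
  obtain ⟨a, rfl⟩ := Nat.exists_eq_succ_of_ne_zero ht
  have hjoin : (H.join (⊥ : SimpleGraph (Fin (n - m)))).CliqueFree (a + 1 + 1) :=
    hH.join (cliqueFree_bot le_rfl)
  refine (gSeq_le_of_card_eq (by simp; omega) hjoin).trans ?_
  gcongr
  rw [compl_join]
  have hbot : kcount s (⊥ᶜ : SimpleGraph (Fin (n - m))) ≤ (n - m).choose s := by
    simpa using kcount_le_choose s (⊥ᶜ : SimpleGraph (Fin (n - m)))
  exact_mod_cast (kcount_sum_le Hᶜ _).trans (Nat.add_le_add_left hbot _)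

end gSeq

lemma tendsto_atTop_of_tendsto_div {m : ℕ → ℕ} {β : ℝ} (hβ : 0 < β)
    (hm : Tendsto (fun n => (m n : ℝ) / n) atTop (𝓝 β)) : Tendsto m atTop atTop := by
  refine tendsto_natCast_atTop_iff.1 ((hm.pos_mul_atTop hβ tendsto_natCast_atTop_atTop).congr' ?_)
  filter_upwards [eventually_ne_atTop 0] with n hn
  field_simp

lemma tendsto_choose_div_choose {m : ℕ → ℕ} {β : ℝ} (hβ : 0 < β)
    (hm : Tendsto (fun n => (m n : ℝ) / n) atTop (𝓝 β)) (k : ℕ) :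
    Tendsto (fun n => ((m n).choose k : ℝ) / n.choose k) atTop (𝓝 (β ^ k)) := by
  have hequiv : (fun n => ((m n).choose k : ℝ) / n.choose k) ~[atTop]
      fun n => ((m n : ℝ) / n) ^ k := by
    refine (((isEquivalent_choose k).comp_tendsto (tendsto_atTop_of_tendsto_div hβ hm)).div
      (isEquivalent_choose k)).trans (EventuallyEq.isEquivalent ?_)
    filter_upwards [eventually_ne_atTop 0] with n hn
    have hn' : (n : ℝ) ≠ 0 := Nat.cast_ne_zero.2 hn
    simp only [Pi.div_apply, Function.comp_apply, div_pow]
    field_simp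
  exact hequiv.tendsto_nhds_iff.2 (hm.pow k)

section gConst

variable {s t : ℕ}

lemma eventually_exists_cliqueFree_kcount_compl_le (ht : 2 ≤ t) {b : ℝ} (hb : gConst s t < b) :
    ∀ᶠ n in atTop,
      ∃ H : SimpleGraph (Fin n), H.CliqueFree t ∧ (kcount s Hᶜ : ℝ) ≤ b * n.choose s := by
  have hbdd : IsBoundedUnder (· ≤ ·) atTop (fun n => gSeq s t n) :=
    isBoundedUnder_of_eventually_le (.of_forall fun _ => gSeq_le_one ht)
  filter_upwards [eventually_lt_of_limsup_lt hb hbdd, eventually_ge_atTop s] with n hn hsn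
  exact exists_cliqueFree_kcount_compl_le ht hsn hn

lemma gConst_succ_le_of_lt (ht : 2 ≤ t) {b β : ℝ} (hβ0 : 0 < β) (hβ1 : β < 1)
    (hb : gConst s t < b) : gConst s (t + 1) ≤ b * β ^ s + (1 - β) ^ s := by
  set m : ℕ → ℕ := fun n => ⌊β * n⌋₊
  have hm_le (n : ℕ) : m n ≤ n :=
    Nat.floor_le_of_le (mul_le_of_le_one_left (Nat.cast_nonneg n) hβ1.le)
  have hm : Tendsto (fun n => (m n : ℝ) / n) atTop (𝓝 β) :=
    (tendsto_nat_floor_mul_div_atTop hβ0.le).comp tendsto_natCast_atTop_atTop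
  have hm' : Tendsto (fun n => ((n - m n : ℕ) : ℝ) / n) atTop (𝓝 (1 - β)) := by
    refine (tendsto_const_nhds.sub hm).congr' ?_
    filter_upwards [eventually_ne_atTop 0] with n hn
    rw [Nat.cast_sub (hm_le n)]
    field_simp
  set bound : ℕ → ℝ := fun n =>
    b * (((m n).choose s : ℝ) / n.choose s) + ((n - m n).choose s : ℝ) / n.choose s
  have hbound : ∀ᶠ n in atTop, gSeq s (t + 1) n ≤ bound n := by
    filter_upwards [(tendsto_atTop_of_tendsto_div hβ0 hm).eventually
      (eventually_exists_cliqueFree_kcount_compl_le ht hb)] with n ⟨H, hH, hHcount⟩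
    calc gSeq s (t + 1) n ≤ (kcount s Hᶜ + (n - m n).choose s) / n.choose s :=
          gSeq_succ_le (by omega) (hm_le n) hH
      _ ≤ (b * (m n).choose s + (n - m n).choose s) / n.choose s := by gcongr
      _ = bound n := by ring
  have hlim : Tendsto bound atTop (𝓝 (b * β ^ s + (1 - β) ^ s)) :=
    ((tendsto_choose_div_choose hβ0 hm s).const_mul b).add
      (tendsto_choose_div_choose (sub_pos.2 hβ1) hm' s)
  have hcobdd : IsCoboundedUnder (· ≤ ·) atTop (fun n => gSeq s (t + 1) n) :=
    (isBoundedUnder_of_eventually_ge (.of_forall fun _ => gSeq_nonneg)).isCoboundedUnder_le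
  exact (limsup_le_limsup hbound hcobdd hlim.isBoundedUnder_le).trans hlim.limsup_eq.le

lemma gConst_succ_le_of_le (ht : 2 ≤ t) {b β : ℝ} (hβ0 : 0 < β) (hβ1 : β < 1)
    (hb : gConst s t ≤ b) : gConst s (t + 1) ≤ b * β ^ s + (1 - β) ^ s := by
  refine le_of_forall_pos_le_add fun ε hε => ?_
  have hβs : β ^ s ≤ 1 := pow_le_one₀ hβ0.le hβ1.le
  calc gConst s (t + 1) ≤ (b + ε) * β ^ s + (1 - β) ^ s :=
        gConst_succ_le_of_lt ht hβ0 hβ1 (by linarith)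
    _ ≤ b * β ^ s + (1 - β) ^ s + ε := by nlinarith

end gConst

lemma rpow_one_sub_mul_pow_add_pow_eq {α : ℝ} (hα : 0 < α) (s : ℕ) :
    α ^ (1 - (s : ℝ)) * (α / (α + 1)) ^ s + (1 - α / (α + 1)) ^ s = (α + 1) ^ (1 - (s : ℝ)) := by
  have hα1 : 0 < α + 1 := by linarith
  have hsub : 1 - α / (α + 1) = 1 / (α + 1) := by field_simp; ring
  rw [hsub, div_pow, div_pow, one_pow, Real.rpow_sub hα, Real.rpow_sub hα1, Real.rpow_one,
    Real.rpow_one, Real.rpow_natCast, Real.rpow_natCast]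
  field_simp

lemma gConst_succ_le_add_one_rpow {s t : ℕ} (ht : 2 ≤ t) {α : ℝ} (hα : 0 < α)
    (h : gConst s t ≤ α ^ (1 - (s : ℝ))) : gConst s (t + 1) ≤ (α + 1) ^ (1 - (s : ℝ)) := by
  have hβ1 : α / (α + 1) < 1 := (div_lt_one (by linarith)).2 (lt_add_one α)
  rw [← rpow_one_sub_mul_pow_add_pow_eq hα s]
  exact gConst_succ_le_of_le ht (by positivity) hβ1 h

lemma gConst_le_sub_add_rpow {s t₀ : ℕ} (ht₀ : 2 ≤ t₀) {α : ℝ} (hα : 0 < α)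
    (h : gConst s t₀ ≤ α ^ (1 - (s : ℝ))) (t : ℕ) (ht : t₀ ≤ t) :
    gConst s t ≤ ((t : ℝ) - t₀ + α) ^ (1 - (s : ℝ)) := by
  induction t, ht using Nat.le_induction with
  | base => simpa using h
  | succ t ht ih =>
    have htR : (t₀ : ℝ) ≤ t := by exact_mod_cast ht
    have := gConst_succ_le_add_one_rpow (by omega) (by linarith) ih
    convert this using 2
    push_cast
    ring

/-- Given `s, t₀ ≥ 2` with `g_{s,t₀} > 0`, for every `t ≥ t₀` one has
`g_{s,t} ≤ (t − t₀ + g_{s,t₀}^{1/(1−s)})^{1−s}`; in particular, if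
`g_{s,t₀} < (t₀ − 1)^{1−s}` then `g_{s,t} < (t − 1)^{1−s}` for all `t ≥ t₀`. -/
theorem gConst_add_vertex (s t₀ : ℕ) (hs : 2 ≤ s) (ht₀ : 2 ≤ t₀)
    (hpos : 0 < gConst s t₀) :
    (∀ t : ℕ, t₀ ≤ t →
      gConst s t ≤
        ((t : ℝ) - (t₀ : ℝ) + gConst s t₀ ^ (1 / (1 - (s : ℝ)))) ^ (1 - (s : ℝ))) ∧
    (gConst s t₀ < ((t₀ : ℝ) - 1) ^ (1 - (s : ℝ)) →
      ∀ t : ℕ, t₀ ≤ t → gConst s t < ((t : ℝ) - 1) ^ (1 - (s : ℝ))) := by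
  have hs1 : 1 - (s : ℝ) < 0 := by
    have : (2 : ℝ) ≤ s := by exact_mod_cast hs
    linarith
  set α := gConst s t₀ ^ (1 / (1 - (s : ℝ)))
  have hα : 0 < α := Real.rpow_pos_of_pos hpos _
  have hbase : gConst s t₀ = α ^ (1 - (s : ℝ)) := by
    rw [← Real.rpow_mul hpos.le, one_div_mul_cancel hs1.ne, Real.rpow_one]
  have hbound := gConst_le_sub_add_rpow ht₀ hα hbase.le
  refine ⟨hbound, fun hsmall t ht => (hbound t ht).trans_lt ?_⟩
  have ht₀R : (2 : ℝ) ≤ t₀ := by exact_mod_cast ht₀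
  have htR : (t₀ : ℝ) ≤ t := by exact_mod_cast ht
  have hαt₀ : (t₀ : ℝ) - 1 < α := by
    rw [hbase] at hsmall
    exact (Real.rpow_lt_rpow_iff_of_neg hα (by linarith) hs1).1 hsmall
  exact Real.rpow_lt_rpow_of_neg (by linarith) (by linarith) hs1
end
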